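/- Let N ≥ 1, X a real normed space, C ⊆ X a nonempty bounded convex subset with diameter at most M for some M > 0, T_1,…,T_N : C → C nonexpansive mappings extended cyclically by T_n := T_{((n−1) mod N)+1}, (λ_n)_{n≥1} a sequence in [0,1], u ∈ C, and let (x_n) be the iteration x_0 = u, x_{n+1} = T_{n+1}(λ_{n+1}·u + (1 − λ_{n+1})·x_n). Assume θ : ℤ₊ → ℤ₊ is a rate of divergence for ∑_{n≥1} λ_n, γ : (0,∞) → ℤ₊ is a Cauchy modulus for ∑_{n≥1} |λ_{n+N} − λ_n|, and α : (0,∞) → ℤ₊ satisfies λ_{n+1} ≤ ε for all ε > 0 and all n ≥ α(ε). Then ‖x_n − x_{n+N}‖ ≤ ε for all n ≥ Φ̃(ε) := θ(γ(ε/(4M)) + max{⌈ln(4M/ε)⌉, 1}), and ‖x_n − T_{n+N}⋯T_{n+1}x_n‖ ≤ ε for all n ≥ Φ(ε) := max{Φ̃(ε/2), α(ε/(4MN))}. -/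

import Mathlib

/-!
Put `a n = ‖x (n + N) - x n‖`. Since `T (n + N + 1) = T (n + 1)` is nonexpansive,
`a (n + 1) ≤ (1 - λ (n + 1)) * a n + M * |λ (n + N + 1) - λ (n + 1)|`. Unwinding this from
`n₀ = γ (ε / 4M)` bounds `a n` by
`M * ∏ (1 - λ k) + M * ∑ |λ (k + N) - λ k| ≤ M * exp (-∑ λ k) + ε / 4`,
and the rate of divergence `θ` makes `∑_{k = n₀ + 1}^{n} λ k ≥ log (4M / ε)` from `Φ̃ ε` on.
For the second bound, `x (n + k)` shadows the exact orbit `T (n + k) ⋯ T (n + 1) (x n)` with an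
error of at most `λ (n + j) * M ≤ ε / (4N)` per step.
-/

/-- `iterComp T n N z` is the composition `T (n+N) (T (n+N-1) (⋯ (T (n+1) z)))`. -/
def iterComp {Y : Type*} (T : ℕ → Y → Y) (n : ℕ) : ℕ → Y → Y
  | 0, z => z
  | (k + 1), z => T (n + k + 1) (iterComp T n k z)

open Finset

lemma prop_of_cyclic {Y : Type*} {T : ℕ → Y} {N : ℕ} (hN : 1 ≤ N)
    (hcyc : ∀ n, 1 ≤ n → T n = T ((n - 1) % N + 1)) {P : Y → Prop}
    (hP : ∀ i, 1 ≤ i → i ≤ N → P (T i)) (n : ℕ) (hn : 1 ≤ n) : P (T n) := by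
  rw [hcyc n hn]
  exact hP _ (Nat.le_add_left 1 _) (Nat.mod_lt _ hN)

lemma cyclic_add_period {Y : Type*} {T : ℕ → Y} {N : ℕ}
    (hcyc : ∀ n, 1 ≤ n → T n = T ((n - 1) % N + 1)) (n : ℕ) : T (n + N + 1) = T (n + 1) := by
  rw [hcyc (n + N + 1) (by omega), hcyc (n + 1) (by omega)]
  simp

lemma prod_one_sub_le_exp_neg_sum {ι : Type*} {s : Finset ι} {f : ι → ℝ}
    (hf : ∀ i ∈ s, f i ≤ 1) : ∏ i ∈ s, (1 - f i) ≤ Real.exp (-∑ i ∈ s, f i) := by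
  rw [← sum_neg_distrib, Real.exp_sum]
  exact prod_le_prod (fun i hi => by linarith [hf i hi]) fun i _ => Real.one_sub_le_exp_neg _

lemma le_mul_prod_add_sum_of_le_one_sub_mul_add {a lam b : ℕ → ℝ}
    (hlam : ∀ k, 1 ≤ k → lam k ∈ Set.Icc (0 : ℝ) 1) (hb : ∀ k, 0 ≤ b k)
    (hrec : ∀ k, a (k + 1) ≤ (1 - lam (k + 1)) * a k + b (k + 1)) {n₀ n : ℕ} (hn : n₀ ≤ n) :
    a n ≤ a n₀ * ∏ k ∈ Ioc n₀ n, (1 - lam k) + ∑ k ∈ Ioc n₀ n, b k := by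
  induction n, hn using Nat.le_induction with
  | base => simp
  | succ n hn ih =>
    rw [prod_Ioc_succ_top hn, sum_Ioc_succ_top hn]
    obtain ⟨hlam0, hlam1⟩ := hlam (n + 1) (by omega)
    have hS : 0 ≤ ∑ k ∈ Ioc n₀ n, b k := sum_nonneg fun k _ => hb k
    calc a (n + 1) ≤ (1 - lam (n + 1)) * a n + b (n + 1) := hrec n
      _ ≤ (1 - lam (n + 1)) * (a n₀ * ∏ k ∈ Ioc n₀ n, (1 - lam k) + ∑ k ∈ Ioc n₀ n, b k)
          + b (n + 1) := by gcongr
      _ ≤ _ := by nlinarith [mul_nonneg hlam0 hS]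

section RateOfDivergence

variable {lam : ℕ → ℝ} {θ : ℕ → ℕ}

lemma le_of_rate_of_divergence (hlam : ∀ k, 1 ≤ k → lam k ≤ 1)
    (hθ : ∀ m : ℕ, 1 ≤ m → (m : ℝ) ≤ ∑ n ∈ Icc 1 (θ m), lam n) {m : ℕ} (hm : 1 ≤ m) :
    m ≤ θ m := by
  have : (m : ℝ) ≤ θ m :=
    (hθ m hm).trans <| (sum_le_sum fun k hk => hlam k (mem_Icc.1 hk).1).trans (by simp)
  exact_mod_cast this

lemma le_sum_Ioc_of_rate_of_divergence (hlam : ∀ k, 1 ≤ k → lam k ∈ Set.Icc (0 : ℝ) 1)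
    (hθ : ∀ m : ℕ, 1 ≤ m → (m : ℝ) ≤ ∑ n ∈ Icc 1 (θ m), lam n) {n₀ L n : ℕ} (hL : 1 ≤ L)
    (hn : θ (n₀ + L) ≤ n) : (L : ℝ) ≤ ∑ k ∈ Ioc n₀ n, lam k := by
  have hθK := le_of_rate_of_divergence (fun k hk => (hlam k hk).2) hθ (m := n₀ + L) (by omega)
  have hhead : ∑ k ∈ Ioc 0 n₀, lam k ≤ n₀ :=
    (sum_le_sum fun k hk => (hlam k (mem_Ioc.1 hk).1).2).trans (by simp)
  have hfull : ((n₀ + L : ℕ) : ℝ) ≤ ∑ k ∈ Ioc 0 n, lam k :=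
    (hθ _ (by omega)).trans <| sum_le_sum_of_subset_of_nonneg (Ioc_subset_Ioc le_rfl hn)
      fun k hk _ => (hlam k (mem_Ioc.1 hk).1).1
  rw [← sum_Ioc_consecutive _ (Nat.zero_le n₀) (by omega : n₀ ≤ n)] at hfull
  push_cast at hfull
  linarith

end RateOfDivergence

theorem le_half_of_recursive_bound {a lam c : ℕ → ℝ} {M : ℝ} (hM : 0 < M)
    (hlam : ∀ k, 1 ≤ k → lam k ∈ Set.Icc (0 : ℝ) 1) (hc : ∀ k, 0 ≤ c k) (ha : ∀ k, a k ≤ M)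
    (hrec : ∀ k, a (k + 1) ≤ (1 - lam (k + 1)) * a k + M * c (k + 1)) {θ : ℕ → ℕ}
    (hθ : ∀ m : ℕ, 1 ≤ m → (m : ℝ) ≤ ∑ n ∈ Icc 1 (θ m), lam n) {γ : ℝ → ℕ}
    (hγ : ∀ ε : ℝ, 0 < ε → ∀ m, 1 ≤ m → ∑ k ∈ Icc (γ ε + 1) (γ ε + m), c k ≤ ε)
    {ε : ℝ} (hε : 0 < ε) {n : ℕ}
    (hn : θ (γ (ε / (4 * M)) + max ⌈Real.log (4 * M / ε)⌉₊ 1) ≤ n) : a n ≤ ε / 2 := by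
  set δ := ε / (4 * M) with hδ
  have hδ_pos : 0 < δ := by positivity
  set n₀ := γ δ
  set L := max ⌈Real.log (4 * M / ε)⌉₊ 1
  have hL : 1 ≤ L := le_max_right _ _
  have hn₀ : n₀ ≤ n :=
    (Nat.le_add_right n₀ L).trans <|
      (le_of_rate_of_divergence (fun k hk => (hlam k hk).2) hθ (by omega)).trans hn
  have hsum : ∑ k ∈ Ioc n₀ n, c k ≤ δ := by
    rcases hn₀.eq_or_lt with h | h
    · simpa [← h] using hδ_pos.le
    · have := hγ δ hδ_pos (n - n₀) (by omega)
      rwa [Icc_add_one_left_eq_Ioc, Nat.add_sub_cancel' hn₀] at this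
  have hlog : Real.log (4 * M / ε) ≤ ∑ k ∈ Ioc n₀ n, lam k :=
    (Nat.le_ceil _).trans <| (Nat.cast_le.2 (le_max_left _ 1)).trans <|
      le_sum_Ioc_of_rate_of_divergence hlam hθ hL hn
  have hprod : ∏ k ∈ Ioc n₀ n, (1 - lam k) ≤ δ :=
    calc ∏ k ∈ Ioc n₀ n, (1 - lam k)
        ≤ Real.exp (-∑ k ∈ Ioc n₀ n, lam k) :=
          prod_one_sub_le_exp_neg_sum fun k hk => (hlam k (by simp at hk; omega)).2
      _ ≤ Real.exp (-Real.log (4 * M / ε)) := Real.exp_le_exp.2 (neg_le_neg hlog)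
      _ = δ := by rw [Real.exp_neg, Real.exp_log (by positivity), inv_div]
  have hprod_nonneg : 0 ≤ ∏ k ∈ Ioc n₀ n, (1 - lam k) :=
    prod_nonneg fun k hk => sub_nonneg.2 (hlam k (by simp at hk; omega)).2
  calc a n ≤ a n₀ * ∏ k ∈ Ioc n₀ n, (1 - lam k) + ∑ k ∈ Ioc n₀ n, M * c k :=
        le_mul_prod_add_sum_of_le_one_sub_mul_add hlam (fun k => mul_nonneg hM.le (hc k)) hrec hn₀
    _ ≤ M * δ + M * δ := by
        rw [← mul_sum]
        exact add_le_add (mul_le_mul (ha n₀) hprod hprod_nonneg hM.le) (by gcongr)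
    _ = ε / 2 := by rw [hδ]; field_simp; ring

lemma iterComp_mem {Y : Type*} {T : ℕ → Y → Y} {C : Set Y}
    (hmap : ∀ m, 1 ≤ m → Set.MapsTo (T m) C C) (n : ℕ) {z : Y} (hz : z ∈ C) :
    ∀ k, iterComp T n k z ∈ C
  | 0 => hz
  | k + 1 => hmap _ (by omega) (iterComp_mem hmap n hz k)

lemma norm_smul_add_one_sub_smul_sub_le {X : Type*} [SeminormedAddCommGroup X]
    [NormedSpace ℝ X] (u y z : X) {a b : ℝ} (hb : b ≤ 1) :
    ‖(a • u + (1 - a) • y) - (b • u + (1 - b) • z)‖ ≤ (1 - b) * ‖y - z‖ + |a - b| * ‖u - y‖ := by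
  have : (a • u + (1 - a) • y) - (b • u + (1 - b) • z) =
      (1 - b) • (y - z) + (a - b) • (u - y) := by module
  rw [this]
  refine (norm_add_le _ _).trans_eq ?_
  rw [norm_smul, norm_smul, Real.norm_eq_abs, Real.norm_eq_abs, abs_of_nonneg (sub_nonneg.2 hb)]

lemma norm_sub_iterComp_le {X : Type*} [SeminormedAddCommGroup X] {C : Set X} {T : ℕ → X → X}
    (hmap : ∀ m, 1 ≤ m → Set.MapsTo (T m) C C)
    (hne : ∀ m, 1 ≤ m → ∀ a ∈ C, ∀ b ∈ C, ‖T m a - T m b‖ ≤ ‖a - b‖) {y w : ℕ → X}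
    (hw : ∀ j, w j ∈ C) (hy : ∀ j, y (j + 1) = T (j + 1) (w j)) {n : ℕ} (hyn : y n ∈ C)
    {δ : ℝ} (hδ : ∀ j, n ≤ j → ‖w j - y j‖ ≤ δ) (k : ℕ) :
    ‖y (n + k) - iterComp T n k (y n)‖ ≤ k * δ := by
  induction k with
  | zero => simp [iterComp]
  | succ k ih =>
    calc ‖y (n + (k + 1)) - iterComp T n (k + 1) (y n)‖
        = ‖T (n + k + 1) (w (n + k)) - T (n + k + 1) (iterComp T n k (y n))‖ := by
          rw [← add_assoc, hy]; rfl
      _ ≤ ‖w (n + k) - iterComp T n k (y n)‖ :=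
          hne _ (by omega) _ (hw _) _ (iterComp_mem hmap n hyn k)
      _ ≤ ‖w (n + k) - y (n + k)‖ + ‖y (n + k) - iterComp T n k (y n)‖ :=
          norm_sub_le_norm_sub_add_norm_sub _ _ _
      _ ≤ δ + k * δ := add_le_add (hδ _ (by omega)) ih
      _ = (k + 1 : ℕ) * δ := by push_cast; ring

section HalpernIteration

variable {X : Type*} [NormedAddCommGroup X] [NormedSpace ℝ X] {C : Set X} {T : ℕ → X → X}
  {lam : ℕ → ℝ} {u : X} {x : ℕ → X}

lemma smul_add_one_sub_smul_mem (hC : Convex ℝ C) (hlam : ∀ n, 1 ≤ n → lam n ∈ Set.Icc (0 : ℝ) 1)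
    (hu : u ∈ C) {y : X} (hy : y ∈ C) (n : ℕ) : lam (n + 1) • u + (1 - lam (n + 1)) • y ∈ C :=
  hC hu hy (hlam _ n.succ_pos).1 (sub_nonneg.2 (hlam _ n.succ_pos).2) (by ring)

lemma halpern_mem (hC : Convex ℝ C) (hmap : ∀ m, 1 ≤ m → Set.MapsTo (T m) C C)
    (hlam : ∀ n, 1 ≤ n → lam n ∈ Set.Icc (0 : ℝ) 1) (hu : u ∈ C) (hx0 : x 0 = u)
    (hx : ∀ n : ℕ, x (n + 1) = T (n + 1) (lam (n + 1) • u + (1 - lam (n + 1)) • x n)) :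
    ∀ n, x n ∈ C
  | 0 => hx0 ▸ hu
  | n + 1 => hx n ▸ hmap _ n.succ_pos
      (smul_add_one_sub_smul_mem hC hlam hu (halpern_mem hC hmap hlam hu hx0 hx n) n)

lemma halpern_norm_sub_add_period_le {N : ℕ} (hC : Convex ℝ C) {M : ℝ}
    (hdiam : ∀ x ∈ C, ∀ y ∈ C, ‖x - y‖ ≤ M) (hcyc : ∀ n, 1 ≤ n → T n = T ((n - 1) % N + 1))
    (hne : ∀ m, 1 ≤ m → ∀ a ∈ C, ∀ b ∈ C, ‖T m a - T m b‖ ≤ ‖a - b‖)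
    (hlam : ∀ n, 1 ≤ n → lam n ∈ Set.Icc (0 : ℝ) 1) (hu : u ∈ C) (hx_mem : ∀ n, x n ∈ C)
    (hx : ∀ n : ℕ, x (n + 1) = T (n + 1) (lam (n + 1) • u + (1 - lam (n + 1)) • x n)) (k : ℕ) :
    ‖x (k + 1 + N) - x (k + 1)‖ ≤
      (1 - lam (k + 1)) * ‖x (k + N) - x k‖ + M * |lam (k + 1 + N) - lam (k + 1)| := by
  rw [add_right_comm, hx (k + N), cyclic_add_period hcyc, hx k, mul_comm M]
  refine (hne _ k.succ_pos _ (smul_add_one_sub_smul_mem hC hlam hu (hx_mem _) _) _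
    (smul_add_one_sub_smul_mem hC hlam hu (hx_mem _) _)).trans <|
      (norm_smul_add_one_sub_smul_sub_le _ _ _ (hlam _ k.succ_pos).2).trans ?_
  gcongr
  exact hdiam u hu _ (hx_mem _)

end HalpernIteration

theorem stmt_6_general {X : Type*} [NormedAddCommGroup X] [NormedSpace ℝ X]
    (N : ℕ) (hN : 1 ≤ N) (C : Set X) (hC : Convex ℝ C)
    (M : ℝ) (hM : 0 < M) (hdiam : ∀ x ∈ C, ∀ y ∈ C, ‖x - y‖ ≤ M)
    (T : ℕ → X → X)
    (hTmap : ∀ i, 1 ≤ i → i ≤ N → Set.MapsTo (T i) C C)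
    (hTne : ∀ i, 1 ≤ i → i ≤ N → ∀ x ∈ C, ∀ y ∈ C, ‖T i x - T i y‖ ≤ ‖x - y‖)
    (hcyc : ∀ n, 1 ≤ n → T n = T ((n - 1) % N + 1))
    (lam : ℕ → ℝ) (hlam : ∀ n, 1 ≤ n → lam n ∈ Set.Icc (0 : ℝ) 1)
    (u : X) (hu : u ∈ C) (x : ℕ → X) (hx0 : x 0 = u)
    (hx : ∀ n : ℕ, x (n + 1) = T (n + 1) (lam (n + 1) • u + (1 - lam (n + 1)) • x n))
    (θ : ℕ → ℕ)
    (hθ : ∀ m : ℕ, 1 ≤ m → (m : ℝ) ≤ ∑ n ∈ Finset.Icc 1 (θ m), lam n)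
    (γ : ℝ → ℕ)
    (hγ : ∀ ε : ℝ, 0 < ε → ∀ m, 1 ≤ m →
      ∑ n ∈ Finset.Icc (γ ε + 1) (γ ε + m), |lam (n + N) - lam n| ≤ ε)
    (α : ℝ → ℕ)
    (hα : ∀ ε : ℝ, 0 < ε → ∀ n : ℕ, α ε ≤ n → lam (n + 1) ≤ ε) :
    ∀ ε : ℝ, 0 < ε →
      (∀ n : ℕ, θ (γ (ε / (4 * M)) + max ⌈Real.log (4 * M / ε)⌉₊ 1) ≤ n →
        ‖x n - x (n + N)‖ ≤ ε) ∧
      (∀ n : ℕ,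
        max (θ (γ (ε / 2 / (4 * M)) + max ⌈Real.log (4 * M / (ε / 2))⌉₊ 1))
          (α (ε / (4 * M * N))) ≤ n →
        ‖x n - iterComp T n N (x n)‖ ≤ ε) := by
  have hmap : ∀ m, 1 ≤ m → Set.MapsTo (T m) C C :=
    prop_of_cyclic hN hcyc (P := fun S => Set.MapsTo S C C) hTmap
  have hne : ∀ m, 1 ≤ m → ∀ a ∈ C, ∀ b ∈ C, ‖T m a - T m b‖ ≤ ‖a - b‖ :=
    prop_of_cyclic hN hcyc (P := fun S => ∀ a ∈ C, ∀ b ∈ C, ‖S a - S b‖ ≤ ‖a - b‖) hTne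
  have hx_mem := halpern_mem hC hmap hlam hu hx0 hx
  have hhalf : ∀ ε : ℝ, 0 < ε → ∀ n : ℕ,
      θ (γ (ε / (4 * M)) + max ⌈Real.log (4 * M / ε)⌉₊ 1) ≤ n → ‖x n - x (n + N)‖ ≤ ε / 2 :=
    fun ε hε n hn => norm_sub_rev (x n) _ ▸
      le_half_of_recursive_bound (a := fun k => ‖x (k + N) - x k‖) hM hlam (fun _ => abs_nonneg _)
        (fun k => hdiam _ (hx_mem _) _ (hx_mem _))
        (halpern_norm_sub_add_period_le hC hdiam hcyc hne hlam hu hx_mem hx) hθ hγ hε hn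
  intro ε hε
  refine ⟨fun n hn => (hhalf ε hε n hn).trans (by linarith), fun n hn => ?_⟩
  have hstep : ∀ j, n ≤ j →
      ‖(lam (j + 1) • u + (1 - lam (j + 1)) • x j) - x j‖ ≤ ε / (4 * M * N) * M := fun j hj => by
    rw [show (lam (j + 1) • u + (1 - lam (j + 1)) • x j) - x j = lam (j + 1) • (u - x j) by module,
      norm_smul, Real.norm_of_nonneg (hlam _ j.succ_pos).1]
    exact mul_le_mul (hα _ (by positivity) j ((le_max_right _ _).trans (hn.trans hj)))
      (hdiam u hu _ (hx_mem j)) (norm_nonneg _) (by positivity)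
  calc ‖x n - iterComp T n N (x n)‖
      ≤ ‖x n - x (n + N)‖ + ‖x (n + N) - iterComp T n N (x n)‖ :=
        norm_sub_le_norm_sub_add_norm_sub _ _ _
    _ ≤ ε / 2 / 2 + N * (ε / (4 * M * N) * M) :=
        add_le_add (hhalf (ε / 2) (by positivity) n ((le_max_left _ _).trans hn))
          (norm_sub_iterComp_le hmap hne
            (fun j => smul_add_one_sub_smul_mem hC hlam hu (hx_mem j) j) hx (hx_mem n) hstep N)
    _ = ε / 2 := by field_simp; ring
    _ ≤ ε := by linarith

/-- Uniform rates of asymptotic regularity for the cyclic iteration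
`x 0 = u`, `x (n+1) = T_{n+1} (λ_{n+1} • u + (1 - λ_{n+1}) • x n)` on a nonempty
bounded convex set of diameter at most `M`. -/
theorem stmt_6 {X : Type*} [NormedAddCommGroup X] [NormedSpace ℝ X]
    (N : ℕ) (hN : 1 ≤ N) (C : Set X) (hCne : C.Nonempty) (hC : Convex ℝ C)
    (M : ℝ) (hM : 0 < M) (hdiam : ∀ x ∈ C, ∀ y ∈ C, ‖x - y‖ ≤ M)
    (T : ℕ → X → X)
    (hTmap : ∀ i, 1 ≤ i → i ≤ N → Set.MapsTo (T i) C C)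
    (hTne : ∀ i, 1 ≤ i → i ≤ N → ∀ x ∈ C, ∀ y ∈ C, ‖T i x - T i y‖ ≤ ‖x - y‖)
    (hcyc : ∀ n, 1 ≤ n → T n = T ((n - 1) % N + 1))
    (lam : ℕ → ℝ) (hlam : ∀ n, 1 ≤ n → lam n ∈ Set.Icc (0 : ℝ) 1)
    (u : X) (hu : u ∈ C) (x : ℕ → X) (hx0 : x 0 = u)
    (hx : ∀ n : ℕ, x (n + 1) = T (n + 1) (lam (n + 1) • u + (1 - lam (n + 1)) • x n))
    (θ : ℕ → ℕ)
    (hθ : ∀ m : ℕ, 1 ≤ m → (m : ℝ) ≤ ∑ n ∈ Finset.Icc 1 (θ m), lam n)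
    (γ : ℝ → ℕ)
    (hγ : ∀ ε : ℝ, 0 < ε → ∀ m, 1 ≤ m →
      ∑ n ∈ Finset.Icc (γ ε + 1) (γ ε + m), |lam (n + N) - lam n| ≤ ε)
    (α : ℝ → ℕ)
    (hα : ∀ ε : ℝ, 0 < ε → ∀ n : ℕ, α ε ≤ n → lam (n + 1) ≤ ε) :
    ∀ ε : ℝ, 0 < ε →
      (∀ n : ℕ, θ (γ (ε / (4 * M)) + max ⌈Real.log (4 * M / ε)⌉₊ 1) ≤ n →
        ‖x n - x (n + N)‖ ≤ ε) ∧
      (∀ n : ℕ,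
        max (θ (γ (ε / 2 / (4 * M)) + max ⌈Real.log (4 * M / (ε / 2))⌉₊ 1))
          (α (ε / (4 * M * N))) ≤ n →
        ‖x n - iterComp T n N (x n)‖ ≤ ε) :=
  stmt_6_general N hN C hC M hM hdiam T hTmap hTne hcyc lam hlam u hu x hx0 hx θ hθ γ hγ α hα
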